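/- arXiv:1706.08427 — 8 statements merged into one kernel-verified Lean document; each statement's English description precedes it below -/
import Mathlib

section
/- Let f: ℝⁿ → ℝ be convex, differentiable and coordinate-wise L-smooth (L > 0), and let the sequence {x_t} be generated by steepest coordinate descent: x_{t+1} = x_t − (1/L)·∇_{i_t} f(x_t)·e_{i_t} with i_t ∈ argmax_{i∈[n]} |∇_i f(x_t)|. Let x* be a minimizer of f with f* = f(x*), and suppose R₁ > 0 satisfies ‖x − x*‖₁ ≤ R₁ for every x with f(x) ≤ f(x_0). Then for every t ≥ 1, f(x_t) − f* ≤ 2·L·R₁²/t. -/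
/-!
Each step of steepest coordinate descent decreases `f` by at least `g² / (2L)`, where `g` is the
largest partial derivative in absolute value. By convexity and the `ℓ₁`–`ℓ∞` duality, the gap
`δₜ = f(xₜ) - f*` is at most `g · R₁`, since the iterates stay in the initial sublevel set. Hence
`δₜ² ≤ 2 L R₁² (δₜ - δₜ₊₁)`, and this recursion forces `t · δₜ ≤ 2 L R₁²`.
-/

open Set

/-- The `i`-th standard unit vector of `ℝⁿ`. -/
def stdBasis (n : ℕ) (i : Fin n) : Fin n → ℝ := Pi.single i 1

theorem le_add_deriv_mul_add_of_abs_deriv_sub_le {g g' : ℝ → ℝ} {L : ℝ}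
    (hg : ∀ s, HasDerivAt g (g' s) s) (hg' : ∀ s, |g' s - g' 0| ≤ L * |s|) (η : ℝ) :
    g η ≤ g 0 + g' 0 * η + L / 2 * η ^ 2 := by
  -- rescaling `[0, η]` to `[0, 1]` treats both signs of `η` at once
  set φ : ℝ → ℝ := fun s => g (s * η) - g' 0 * (s * η) - L / 2 * (s * η) ^ 2
  have hφ : ∀ s, HasDerivAt φ ((g' (s * η) - g' 0) * η - L * s * η ^ 2) s := by
    intro s
    have hlin : HasDerivAt (fun s : ℝ => s * η) η s := by simpa using hasDerivAt_mul_const η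
    exact (((hg (s * η)).comp s hlin).sub (hlin.const_mul (g' 0))).sub
      ((hlin.pow 2).const_mul (L / 2)) |>.congr_deriv (by push_cast; ring)
  have hφ' : ∀ s ∈ interior (Icc (0 : ℝ) 1), (g' (s * η) - g' 0) * η - L * s * η ^ 2 ≤ 0 := by
    intro s hs
    have hs0 : 0 ≤ s := (interior_subset hs).1
    have hbound : (g' (s * η) - g' 0) * η ≤ L * s * η ^ 2 :=
      calc (g' (s * η) - g' 0) * η ≤ |g' (s * η) - g' 0| * |η| := by
            rw [← abs_mul]; exact le_abs_self _
        _ ≤ L * |s * η| * |η| := by gcongr; exact hg' _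
        _ = L * s * η ^ 2 := by rw [abs_mul, abs_of_nonneg hs0, ← sq_abs η]; ring
    linarith
  have hanti : AntitoneOn φ (Icc 0 1) :=
    antitoneOn_of_hasDerivWithinAt_nonpos (convex_Icc 0 1)
      (fun s _ => (hφ s).continuousAt.continuousWithinAt)
      (fun s _ => (hφ s).hasDerivWithinAt) hφ'
  have h10 : φ 1 ≤ φ 0 :=
    hanti (left_mem_Icc.2 zero_le_one) (right_mem_Icc.2 zero_le_one) zero_le_one
  simp only [φ, one_mul, zero_mul, mul_zero, sub_zero, ne_eq, OfNat.ofNat_ne_zero,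
    not_false_eq_true, zero_pow] at h10
  linarith

section NormedSpace

variable {E : Type*} [NormedAddCommGroup E] [NormedSpace ℝ E] {f : E → ℝ}

theorem apply_sub_fderiv_div_smul_le (hf : Differentiable ℝ f) {L : ℝ} (hL : 0 < L) (y v : E)
    (hv : ∀ s : ℝ, |fderiv ℝ f (y + s • v) v - fderiv ℝ f y v| ≤ L * |s|) :
    f (y - (fderiv ℝ f y v / L) • v) ≤ f y - fderiv ℝ f y v ^ 2 / (2 * L) := by
  have hline : ∀ s : ℝ, HasDerivAt (fun s => f (y + s • v)) (fderiv ℝ f (y + s • v) v) s :=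
    fun s => (hf _).hasFDerivAt.comp_hasDerivAt s
      (by simpa using ((hasDerivAt_id s).smul_const v).const_add y)
  have := le_add_deriv_mul_add_of_abs_deriv_sub_le hline (by simpa using hv)
    (-(fderiv ℝ f y v / L))
  simp only [zero_smul, add_zero, neg_smul, ← sub_eq_add_neg] at this
  convert this using 1
  field_simp
  ring

theorem ConvexOn.add_fderiv_sub_le (hf : ConvexOn ℝ univ f) {y : E}
    (hd : DifferentiableAt ℝ f y) (z : E) : f y + fderiv ℝ f y (z - y) ≤ f z := by
  have hline : HasDerivAt (f ∘ AffineMap.lineMap (k := ℝ) y z) (fderiv ℝ f y (z - y)) 0 := by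
    rw [← AffineMap.lineMap_apply_zero (k := ℝ) y z] at hd
    simpa using hd.hasFDerivAt.comp_hasDerivAt _ AffineMap.hasDerivAt_lineMap
  have hslope : slope (f ∘ AffineMap.lineMap (k := ℝ) y z) 0 1 = f z - f y := by
    simp [slope_def_field]
  have := (hf.comp_affineMap (AffineMap.lineMap y z)).le_slope_of_hasDerivAt (mem_univ 0)
    (mem_univ 1) one_pos hline
  linarith

end NormedSpace

section Coordinates

variable {ι : Type*} [Fintype ι] [DecidableEq ι]

theorem ContinuousLinearMap.abs_apply_le_mul_sum_abs (φ : (ι → ℝ) →L[ℝ] ℝ) {M : ℝ}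
    (hM : ∀ j, |φ (Pi.single j 1)| ≤ M) (v : ι → ℝ) : |φ v| ≤ M * ∑ j, |v j| := by
  have hexpand : φ v = ∑ j, v j * φ (Pi.single j 1) := by
    conv_lhs => rw [← Finset.univ_sum_single v, map_sum]
    exact Finset.sum_congr rfl fun j _ => by
      rw [← smul_eq_mul, ← map_smul, ← Pi.single_smul', smul_eq_mul, mul_one]
  calc |φ v| ≤ ∑ j, |v j| * |φ (Pi.single j 1)| := by
        rw [hexpand]; exact (Finset.abs_sum_le_sum_abs _ _).trans_eq (by simp only [abs_mul])
    _ ≤ ∑ j, |v j| * M := by gcongr with j; exact hM j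
    _ = M * ∑ j, |v j| := by rw [← Finset.sum_mul, mul_comm]

theorem ConvexOn.sub_le_mul_sum_abs {f : (ι → ℝ) → ℝ} (hf : ConvexOn ℝ univ f) {y : ι → ℝ}
    (hd : DifferentiableAt ℝ f y) {M : ℝ} (hM : ∀ j, |fderiv ℝ f y (Pi.single j 1)| ≤ M)
    (z : ι → ℝ) : f y - f z ≤ M * ∑ j, |y j - z j| := by
  have hgrad := hf.add_fderiv_sub_le hd z
  have hdual := (fderiv ℝ f y).abs_apply_le_mul_sum_abs hM (y - z)
  rw [← neg_sub y z, map_neg] at hgrad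
  simp only [Pi.sub_apply] at hdual
  linarith [le_abs_self (fderiv ℝ f y (y - z))]

end Coordinates

theorem natCast_mul_le_of_sq_le_mul_sub {a : ℕ → ℝ} {C : ℝ} (hC : 0 ≤ C) (ha : ∀ t, 0 ≤ a t)
    (hanti : Antitone a) (hsq : ∀ t, a t ^ 2 ≤ C * (a t - a (t + 1))) (t : ℕ) :
    t * a t ≤ C := by
  induction t with
  | zero => simpa using hC
  | succ t ih =>
    have hle : a (t + 1) ≤ a t := hanti t.le_succ
    rcases (ha t).eq_or_lt with hzero | hpos
    · have : a (t + 1) = 0 := le_antisymm (hzero ▸ hle) (ha _)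
      simpa [this] using hC
    · -- multiply the goal by `a t > 0`; then `ih` and `hsq t` add up to it
      have hprod : a t * ((t + 1) * a (t + 1)) ≤ a t * C := by
        nlinarith [hsq t, mul_le_mul_of_nonneg_right ih (ha (t + 1)),
          mul_le_mul_of_nonneg_left hle (ha (t + 1))]
      push_cast
      exact le_of_mul_le_mul_left hprod hpos

theorem scd_smooth_convergence_general {n : ℕ} (L R₁ : ℝ) (hL : 0 < L)
    (f : (Fin n → ℝ) → ℝ)
    (hconv : ConvexOn ℝ Set.univ f)
    (hdiff : Differentiable ℝ f)
    (hsmooth : ∀ (y : Fin n → ℝ) (i : Fin n) (η : ℝ),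
      |fderiv ℝ f (y + η • stdBasis n i) (stdBasis n i) -
        fderiv ℝ f y (stdBasis n i)| ≤ L * |η|)
    (x : ℕ → Fin n → ℝ) (idx : ℕ → Fin n)
    (hsel : ∀ (t : ℕ) (j : Fin n),
      |fderiv ℝ f (x t) (stdBasis n j)| ≤
        |fderiv ℝ f (x t) (stdBasis n (idx t))|)
    (hupd : ∀ t : ℕ, x (t + 1) =
      x t - (fderiv ℝ f (x t) (stdBasis n (idx t)) / L) • stdBasis n (idx t))
    (xstar : Fin n → ℝ) (hmin : ∀ y, f xstar ≤ f y)
    (hlevel : ∀ y : Fin n → ℝ, f y ≤ f (x 0) → ∑ j, |y j - xstar j| ≤ R₁) :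
    ∀ t : ℕ, 1 ≤ t → f (x t) - f xstar ≤ 2 * L * R₁ ^ 2 / t := by
  set g : ℕ → ℝ := fun t => fderiv ℝ f (x t) (stdBasis n (idx t))
  set δ : ℕ → ℝ := fun t => f (x t) - f xstar with hδ
  have hdescent : ∀ t, g t ^ 2 ≤ 2 * L * (δ t - δ (t + 1)) := fun t => by
    have hstep := apply_sub_fderiv_div_smul_le hdiff hL (x t) _ (hsmooth (x t) (idx t))
    rw [← hupd t] at hstep
    have hdecrease : g t ^ 2 / (2 * L) ≤ δ t - δ (t + 1) := by simp only [hδ]; linarith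
    rwa [div_le_iff₀' (by positivity)] at hdecrease
  have hanti : Antitone δ :=
    antitone_nat_of_succ_le fun t => by nlinarith [hdescent t, sq_nonneg (g t)]
  have hgap : ∀ t, δ t ≤ |g t| * R₁ := fun t =>
    (hconv.sub_le_mul_sum_abs (hdiff _) (hsel t) xstar).trans <|
      mul_le_mul_of_nonneg_left (hlevel _ (by linarith [hanti t.zero_le])) (abs_nonneg _)
  have hsq : ∀ t, δ t ^ 2 ≤ 2 * L * R₁ ^ 2 * (δ t - δ (t + 1)) := fun t =>
    calc δ t ^ 2 ≤ (|g t| * R₁) ^ 2 := pow_le_pow_left₀ (sub_nonneg.2 (hmin _)) (hgap t) 2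
      _ = g t ^ 2 * R₁ ^ 2 := by rw [mul_pow, sq_abs]
      _ ≤ 2 * L * (δ t - δ (t + 1)) * R₁ ^ 2 := by gcongr; exact hdescent t
      _ = 2 * L * R₁ ^ 2 * (δ t - δ (t + 1)) := by ring
  intro t ht
  rw [le_div_iff₀ (by exact_mod_cast ht), mul_comm]
  exact natCast_mul_le_of_sq_le_mul_sub (by positivity) (fun t => sub_nonneg.2 (hmin _)) hanti
    hsq t

/-- Convergence of steepest coordinate descent (SCD) on convex,
coordinate-wise `L`-smooth functions: `f(x_t) - f* ≤ 2 L R₁² / t`. -/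
theorem scd_smooth_convergence {n : ℕ} (L R₁ : ℝ) (hL : 0 < L) (hR₁ : 0 < R₁)
    (f : (Fin n → ℝ) → ℝ)
    (hconv : ConvexOn ℝ Set.univ f)
    (hdiff : Differentiable ℝ f)
    (hsmooth : ∀ (y : Fin n → ℝ) (i : Fin n) (η : ℝ),
      |fderiv ℝ f (y + η • stdBasis n i) (stdBasis n i) -
        fderiv ℝ f y (stdBasis n i)| ≤ L * |η|)
    (x : ℕ → Fin n → ℝ) (idx : ℕ → Fin n)
    (hsel : ∀ (t : ℕ) (j : Fin n),
      |fderiv ℝ f (x t) (stdBasis n j)| ≤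
        |fderiv ℝ f (x t) (stdBasis n (idx t))|)
    (hupd : ∀ t : ℕ, x (t + 1) =
      x t - (fderiv ℝ f (x t) (stdBasis n (idx t)) / L) • stdBasis n (idx t))
    (xstar : Fin n → ℝ) (hmin : ∀ y, f xstar ≤ f y)
    (hlevel : ∀ y : Fin n → ℝ, f y ≤ f (x 0) → ∑ j, |y j - xstar j| ≤ R₁) :
    ∀ t : ℕ, 1 ≤ t → f (x t) - f xstar ≤ 2 * L * R₁ ^ 2 / t :=
  scd_smooth_convergence_general L R₁ hL f hconv hdiff hsmooth x idx hsel hupd xstar hmin hlevel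
end

section
/- Let f: ℝⁿ → ℝ be convex, differentiable and coordinate-wise L-smooth (L > 0), let x* be a minimizer of f with f* = f(x*), and let x ∈ ℝⁿ satisfy f(x) > f*. Let i ∈ argmax_{j∈[n]} |∇_j f(x)| and set x⁺ = x − (1/L)·∇_i f(x)·e_i. If f(x⁺) > f*, then 1/(f(x⁺) − f*) − 1/(f(x) − f*) ≥ 1/(2·L·‖x − x*‖₁²). -/
/-! With `g = ∇ᵢ f(x)` and `δ = f(x) − f*`, the coordinate step of length `1/L` lowers `f` by at
least `g² / (2L)` (the descent lemma along a line, from the Lipschitz bound on the directional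
derivative). Convexity and Hölder's inequality give `δ ≤ ∇f(x) · (x − x*) ≤ ‖x − x*‖₁ |g|`, since
`i` is the steepest coordinate. So `δ − δ⁺ ≥ δ² / (2L‖x − x*‖₁²)`, and dividing by `δ δ⁺ ≤ δ²`
gives the bound on `1/δ⁺ − 1/δ`. -/

open Set

theorem image_one_le_of_deriv_sub_le {g g' : ℝ → ℝ} {C : ℝ}
    (hg : ∀ t ∈ Icc (0 : ℝ) 1, HasDerivAt g (g' t) t)
    (hbound : ∀ t ∈ Icc (0 : ℝ) 1, g' t - g' 0 ≤ C * t) : g 1 ≤ g 0 + g' 0 + C / 2 := by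
  have hB : ∀ t, HasDerivAt (fun t => g 0 + g' 0 * t + C / 2 * t ^ 2) (g' 0 + C * t) t := by
    intro t
    refine ((((hasDerivAt_id t).const_mul (g' 0)).const_add (g 0)).add
      ((hasDerivAt_pow 2 t).const_mul (C / 2))).congr_deriv ?_
    simp only [mul_one, Nat.cast_ofNat]
    ring
  have := image_le_of_deriv_right_le_deriv_boundary (f := g) (a := 0) (b := 1)
    (fun t ht => (hg t ht).continuousAt.continuousWithinAt)
    (fun t ht => (hg t (Ico_subset_Icc_self ht)).hasDerivWithinAt) (by simp)
    (fun t _ => (hB t).continuousAt.continuousWithinAt) (fun t _ => (hB t).hasDerivWithinAt)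
    (fun t ht => by linarith [hbound t (Ico_subset_Icc_self ht)]) (right_mem_Icc.2 zero_le_one)
  simpa using this

section Normed

variable {E : Type*} [NormedAddCommGroup E] [NormedSpace ℝ E] {f : E → ℝ} {L : ℝ} {y v : E}

theorem ConvexOn.hasFDerivAt_sub_le {f' : E →L[ℝ] ℝ} {s : Set E} {x : E} (hf : ConvexOn ℝ s f)
    (hx : x ∈ s) (hy : y ∈ s) (hf' : HasFDerivAt f f' x) : f' (y - x) ≤ f y - f x := by
  set ℓ : ℝ →ᵃ[ℝ] E := AffineMap.lineMap x y
  have hline : ConvexOn ℝ (ℓ ⁻¹' s) (f ∘ ℓ) := hf.comp_affineMap ℓ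
  have hderiv : HasDerivAt (f ∘ ℓ) (f' (y - x)) 0 := by
    simpa using hf'.comp_hasDerivAt_of_eq (0 : ℝ) AffineMap.hasDerivAt_lineMap (by simp)
  simpa [slope_def_field, ℓ] using
    hline.le_slope_of_hasDerivAt (by simpa [ℓ] using hx) (by simpa [ℓ] using hy) zero_lt_one hderiv

theorem apply_add_smul_le_of_abs_fderiv_sub_le (hf : Differentiable ℝ f)
    (hv : ∀ η : ℝ, |fderiv ℝ f (y + η • v) v - fderiv ℝ f y v| ≤ L * |η|) (η : ℝ) :
    f (y + η • v) ≤ f y + η * fderiv ℝ f y v + L * η ^ 2 / 2 := by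
  have hline : ∀ t : ℝ, HasDerivAt (fun t : ℝ => f (y + (t * η) • v))
      (η * fderiv ℝ f (y + (t * η) • v) v) t := by
    intro t
    have hpath : HasDerivAt (fun t : ℝ => y + (t * η) • v) (η • v) t := by
      simpa using (((hasDerivAt_id t).mul_const η).smul_const v).const_add y
    have := (hf _).hasFDerivAt.comp_hasDerivAt t hpath
    rwa [map_smul, smul_eq_mul] at this
  have := image_one_le_of_deriv_sub_le (C := L * η ^ 2) (fun t _ => hline t) fun t ht => by
    calc η * fderiv ℝ f (y + (t * η) • v) v - η * fderiv ℝ f (y + (0 * η) • v) v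
        = η * (fderiv ℝ f (y + (t * η) • v) v - fderiv ℝ f y v) := by simp [mul_sub]
      _ ≤ |η| * (L * |t * η|) :=
        (le_abs_self _).trans (by rw [abs_mul]; gcongr; exact hv _)
      _ = L * η ^ 2 * t := by rw [abs_mul, abs_of_nonneg ht.1, ← sq_abs η]; ring
  simpa [mul_div_assoc] using this

theorem apply_sub_div_smul_le_sub_sq_div (hL : 0 < L) (hf : Differentiable ℝ f)
    (hv : ∀ η : ℝ, |fderiv ℝ f (y + η • v) v - fderiv ℝ f y v| ≤ L * |η|) :
    f (y - (fderiv ℝ f y v / L) • v) ≤ f y - fderiv ℝ f y v ^ 2 / (2 * L) := by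
  have := apply_add_smul_le_of_abs_fderiv_sub_le hf hv (-(fderiv ℝ f y v / L))
  rw [neg_smul, ← sub_eq_add_neg] at this
  convert this using 1
  field_simp
  ring

end Normed

theorem LinearMap.apply_le_sum_abs_mul {ι : Type*} [Fintype ι] [DecidableEq ι]
    (ℓ : (ι → ℝ) →ₗ[ℝ] ℝ) (v : ι → ℝ) {M : ℝ} (hM : ∀ j, |ℓ (Pi.single j 1)| ≤ M) :
    ℓ v ≤ (∑ j, |v j|) * M := by
  rw [ℓ.pi_apply_eq_sum_univ, Finset.sum_mul]
  refine Finset.sum_le_sum fun j _ => ?_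
  calc v j • ℓ (fun k => if j = k then 1 else 0) ≤ |v j * ℓ (Pi.single j 1)| := by
        have hsingle : (fun k => if j = k then (1 : ℝ) else 0) = Pi.single j 1 := by
          ext k
          simp [Pi.single_apply, eq_comm]
        rw [hsingle, smul_eq_mul]
        exact le_abs_self _
    _ ≤ |v j| * M := by rw [abs_mul]; gcongr; exact hM j

theorem one_div_le_one_div_sub_one_div {d d' g S L : ℝ} (hL : 0 < L) (hd' : 0 < d')
    (hdesc : d' ≤ d - g ^ 2 / (2 * L)) (hgrad : d ≤ S * |g|) :
    1 / (2 * L * S ^ 2) ≤ 1 / d' - 1 / d := by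
  have hd'd : d' ≤ d := hdesc.trans (sub_le_self _ (by positivity))
  have hd : 0 < d := hd'.trans_le hd'd
  have hsq : d ^ 2 ≤ S ^ 2 * g ^ 2 := by
    calc d ^ 2 ≤ (S * |g|) ^ 2 := pow_le_pow_left₀ hd.le hgrad 2
      _ = S ^ 2 * g ^ 2 := by rw [mul_pow, sq_abs]
  have hS : S ≠ 0 := by
    rintro rfl
    rw [zero_mul] at hgrad
    linarith
  rw [div_sub_div _ _ hd'.ne' hd.ne', div_le_div_iff₀ (by positivity) (by positivity)]
  have : g ^ 2 ≤ 2 * L * (d - d') := by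
    linarith [(div_le_iff₀ (by positivity)).1 (le_sub_comm.1 hdesc)]
  nlinarith [mul_le_mul_of_nonneg_left this (sq_nonneg S), mul_le_mul_of_nonneg_left hd'd hd.le]

theorem scd_one_step_inverse_progress_general {n : ℕ} (L : ℝ) (hL : 0 < L)
    (f : (Fin n → ℝ) → ℝ)
    (hconv : ConvexOn ℝ Set.univ f)
    (hdiff : Differentiable ℝ f)
    (hsmooth : ∀ (y : Fin n → ℝ) (i : Fin n) (η : ℝ),
      |fderiv ℝ f (y + η • stdBasis n i) (stdBasis n i) -
        fderiv ℝ f y (stdBasis n i)| ≤ L * |η|)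
    (xstar : Fin n → ℝ)
    (x : Fin n → ℝ)
    (i : Fin n)
    (hi : ∀ j : Fin n, |fderiv ℝ f x (stdBasis n j)| ≤ |fderiv ℝ f x (stdBasis n i)|)
    (xplus : Fin n → ℝ)
    (hxplus : xplus = x - (fderiv ℝ f x (stdBasis n i) / L) • stdBasis n i)
    (hplus : f xstar < f xplus) :
    1 / (f xplus - f xstar) - 1 / (f x - f xstar) ≥
      1 / (2 * L * (∑ j, |x j - xstar j|) ^ 2) := by
  have hdesc : f xplus ≤ f x - fderiv ℝ f x (stdBasis n i) ^ 2 / (2 * L) :=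
    hxplus ▸ apply_sub_div_smul_le_sub_sq_div hL hdiff (hsmooth x i)
  have hsupport : fderiv ℝ f x (xstar - x) ≤ f xstar - f x :=
    hconv.hasFDerivAt_sub_le (mem_univ x) (mem_univ xstar) (hdiff x).hasFDerivAt
  have hholder : fderiv ℝ f x (x - xstar) ≤
      (∑ j, |x j - xstar j|) * |fderiv ℝ f x (stdBasis n i)| :=
    (fderiv ℝ f x).toLinearMap.apply_le_sum_abs_mul (x - xstar) hi
  rw [← neg_sub, map_neg] at hsupport
  exact one_div_le_one_div_sub_one_div hL (sub_pos.2 hplus)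
    (by rw [sub_right_comm]; exact sub_le_sub_right hdesc _) (by linarith)

/-- one-step progress of the steepest coordinate descent step, measured
in inverse distances of function values to the optimum:
`1/(f(x⁺) − f*) − 1/(f(x) − f*) ≥ 1/(2 L ‖x − x*‖₁²)`. -/
theorem scd_one_step_inverse_progress {n : ℕ} (L : ℝ) (hL : 0 < L)
    (f : (Fin n → ℝ) → ℝ)
    (hconv : ConvexOn ℝ Set.univ f)
    (hdiff : Differentiable ℝ f)
    (hsmooth : ∀ (y : Fin n → ℝ) (i : Fin n) (η : ℝ),
      |fderiv ℝ f (y + η • stdBasis n i) (stdBasis n i) -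
        fderiv ℝ f y (stdBasis n i)| ≤ L * |η|)
    (xstar : Fin n → ℝ) (hmin : ∀ y, f xstar ≤ f y)
    (x : Fin n → ℝ) (hx : f xstar < f x)
    (i : Fin n)
    (hi : ∀ j : Fin n, |fderiv ℝ f x (stdBasis n j)| ≤ |fderiv ℝ f x (stdBasis n i)|)
    (xplus : Fin n → ℝ)
    (hxplus : xplus = x - (fderiv ℝ f x (stdBasis n i) / L) • stdBasis n i)
    (hplus : f xstar < f xplus) :
    1 / (f xplus - f xstar) - 1 / (f x - f xstar) ≥
      1 / (2 * L * (∑ j, |x j - xstar j|) ^ 2) :=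
  scd_one_step_inverse_progress_general L hL f hconv hdiff hsmooth xstar x i hi xplus hxplus hplus
end

section
/- Let n > 2, 0 < α < 1/2, and let c ∈ (0,1) satisfy c^{n−1} = ((1 − α)/n)·Σ_{k=0}^{n−1} c^{k}. Consider q(x) = (1/2)·⟨Qx, x⟩ with Q = ((α − 1)/n)·J_n + I_n and the starting point x₀ with [x₀]_i = c^{i−1} for i = 1,…,n. Then steepest coordinate descent with exact coordinate minimization (choosing i_t ∈ argmax_{i∈[n]} |∇_i q(x_t)| and setting x_{t+1} = x_t − (∇_{i_t} q(x_t)/Q_{i_t i_t})·e_{i_t}) cycles through the coordinates: for every t ≥ 1 the active coordinate is i_t = 1 + ((t−1) mod n), the iterate x_t agrees with x_{t−1} in all other coordinates, and [x_t]_{1+((t−1) mod n)} = c^{n}·[x_{t−1}]_{1+((t−1) mod n)}. -/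
/-- The matrix `Q = ((α − 1)/n) J_n + I_n` where `J_n` is the all-ones matrix. -/
noncomputable def Qmat (n : ℕ) (α : ℝ) : Matrix (Fin n) (Fin n) ℝ :=
  ((α - 1) / n) • Matrix.of (fun _ _ => (1 : ℝ)) + 1

open Finset
open scoped Matrix Fin.NatCast

section Qmat

variable {n : ℕ} (α : ℝ)

lemma Qmat_mulVec_apply (v : Fin n → ℝ) (j : Fin n) :
    (Qmat n α *ᵥ v) j = (α - 1) / n * ∑ k, v k + v j := by
  simp [Qmat, Matrix.mulVec, dotProduct, Matrix.one_apply, add_mul, sum_add_distrib, mul_sum]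

lemma Qmat_apply_self (j : Fin n) : Qmat n α j j = (α - 1) / n + 1 := by
  simp [Qmat]

lemma Qmat_apply_self_pos {α : ℝ} (hα : 0 < α) (j : Fin n) : 0 < Qmat n α j j := by
  have hn : (1 : ℝ) ≤ n := by exact_mod_cast j.pos
  rw [Qmat_apply_self, div_add_one (by positivity)]
  exact div_pos (by linarith) (by linarith)

end Qmat

lemma one_sub_pow_pred_eq_mul {n : ℕ} (hn : n ≠ 0) {α c : ℝ}
    (hc : c ^ (n - 1) = (1 - α) / n * ∑ k ∈ range n, c ^ k) :
    1 - c ^ (n - 1) = ((α - 1) / n + 1) * (1 - c ^ n) := by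
  have hpow : c ^ n = c ^ (n - 1) * c := by rw [← pow_succ, Nat.sub_add_cancel (by omega)]
  linear_combination (c - 1) * hc - (α - 1) / n * geom_sum_mul c n + hpow

section cyclicIterate

variable {n : ℕ} [NeZero n] {c : ℝ}

/-- Coordinate `j` is `c^e` for the unique `e ∈ [t, t+n)` with `e ≡ j (mod n)`. -/
def cyclicIterate (c : ℝ) (t : ℕ) : Fin n → ℝ := fun j => c ^ (t + ((j - t : Fin n) : ℕ))

lemma cyclicIterate_zero (j : Fin n) : cyclicIterate c 0 j = c ^ (j : ℕ) := by
  simp [cyclicIterate]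

lemma sum_cyclicIterate (t : ℕ) :
    ∑ j, cyclicIterate (n := n) c t j = c ^ t * ∑ k ∈ range n, c ^ k := by
  rw [mul_sum, ← Fin.sum_univ_eq_sum_range]
  exact Fintype.sum_equiv (Equiv.subRight (t : Fin n)) _ _ fun _ => pow_add c t _

lemma cyclicIterate_natCast_self (t : ℕ) : cyclicIterate c t (t : Fin n) = c ^ t := by
  simp [cyclicIterate]

lemma cyclicIterate_lt_of_ne (hc0 : 0 < c) (hc1 : c < 1) {t : ℕ} {j : Fin n}
    (hj : j ≠ t) : cyclicIterate c t j < c ^ t := by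
  have hpos : 0 < ((j - t : Fin n) : ℕ) :=
    Nat.pos_of_ne_zero (Fin.val_ne_zero_iff.mpr (sub_ne_zero.mpr hj))
  exact pow_lt_pow_right_of_lt_one₀ hc0 hc1 (by omega)

lemma pow_le_cyclicIterate (hc0 : 0 ≤ c) (hc1 : c ≤ 1) (t : ℕ) (j : Fin n) :
    c ^ (t + (n - 1)) ≤ cyclicIterate c t j :=
  pow_le_pow_of_le_one hc0 hc1 (by have := (j - t : Fin n).isLt; omega)

lemma sub_natCast_succ (j : Fin n) (t : ℕ) :
    j - ((t + 1 : ℕ) : Fin n) = (j - t) - 1 := by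
  push_cast; abel

lemma cyclicIterate_succ_of_ne {t : ℕ} {j : Fin n} (hj : j ≠ t) :
    cyclicIterate c (t + 1) j = cyclicIterate c t j := by
  have hpos : 0 < ((j - t : Fin n) : ℕ) :=
    Nat.pos_of_ne_zero (Fin.val_ne_zero_iff.mpr (sub_ne_zero.mpr hj))
  simp only [cyclicIterate, sub_natCast_succ,
    Fin.val_sub_one_of_ne_zero (sub_ne_zero.mpr hj)]
  congr 1; omega

lemma cyclicIterate_succ_natCast_self (t : ℕ) :
    cyclicIterate c (t + 1) (t : Fin n) = c ^ (t + n) := by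
  obtain ⟨m, rfl⟩ := Nat.exists_eq_succ_of_ne_zero (NeZero.ne n)
  simp only [cyclicIterate, sub_natCast_succ, sub_self, zero_sub, Fin.coe_neg_one]
  congr 1; omega

variable {α : ℝ}

lemma Qmat_mulVec_cyclicIterate (hc : c ^ (n - 1) = (1 - α) / n * ∑ k ∈ range n, c ^ k)
    (t : ℕ) (j : Fin n) :
    (Qmat n α *ᵥ cyclicIterate c t) j = cyclicIterate c t j - c ^ (t + (n - 1)) := by
  rw [Qmat_mulVec_apply, sum_cyclicIterate, pow_add, hc]
  ring

lemma eq_of_forall_abs_Qmat_mulVec_cyclicIterate_le (hc0 : 0 < c) (hc1 : c < 1)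
    (hc : c ^ (n - 1) = (1 - α) / n * ∑ k ∈ range n, c ^ k) {t : ℕ} {i : Fin n}
    (hsel : ∀ j, |(Qmat n α *ᵥ cyclicIterate c t) j| ≤ |(Qmat n α *ᵥ cyclicIterate c t) i|) :
    i = t := by
  by_contra hi
  have hle := hsel t
  have hlow := pow_le_cyclicIterate hc0.le hc1.le t i
  simp only [Qmat_mulVec_cyclicIterate hc, cyclicIterate_natCast_self] at hle
  rw [abs_of_nonneg (sub_nonneg.mpr hlow), abs_of_nonneg (sub_nonneg.mpr
    (pow_le_pow_of_le_one hc0.le hc1.le (Nat.le_add_right t _)))] at hle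
  linarith [cyclicIterate_lt_of_ne hc0 hc1 hi]

lemma cyclicIterate_sub_smul_stdBasis (hα : 0 < α)
    (hc : c ^ (n - 1) = (1 - α) / n * ∑ k ∈ range n, c ^ k) (t : ℕ) :
    cyclicIterate c t - ((Qmat n α *ᵥ cyclicIterate c t) t / Qmat n α t t) • stdBasis n t =
      cyclicIterate c (t + 1) := by
  funext j
  by_cases hj : j = t
  · subst hj
    have hD := Qmat_apply_self_pos hα (t : Fin n)
    simp only [Pi.sub_apply, Pi.smul_apply, stdBasis, Pi.single_eq_same, smul_eq_mul, mul_one,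
      Qmat_mulVec_cyclicIterate hc, cyclicIterate_natCast_self, cyclicIterate_succ_natCast_self]
    rw [sub_eq_iff_eq_add, ← sub_eq_iff_eq_add', eq_div_iff hD.ne', Qmat_apply_self, pow_add,
      pow_add]
    linear_combination -c ^ t * one_sub_pow_pred_eq_mul (NeZero.ne n) hc
  · simp [stdBasis, Pi.single_eq_of_ne hj, cyclicIterate_succ_of_ne hj]

end cyclicIterate

/-- with `c` the solution of `c^{n−1} = ((1−α)/n) ∑_{k<n} c^k` and the
starting point `[x₀]_i = c^{i−1}`, steepest coordinate descent with exact coordinate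
minimization on `q(x) = ½⟨Qx,x⟩` cycles through the coordinates: the step from `x_t`
to `x_{t+1}` uses the coordinate `t mod n` (1-based: `1 + ((t−1) mod n)` at step `t`),
leaves all other coordinates unchanged, and multiplies the active coordinate
by `c^n`. -/
theorem scd_cycles_through_coordinates {n : ℕ} (hn : 2 < n)
    (α : ℝ) (hα0 : 0 < α)
    (c : ℝ) (hc0 : 0 < c) (hc1 : c < 1)
    (hc : c ^ (n - 1) = ((1 - α) / n) * ∑ k ∈ Finset.range n, c ^ k)
    (x : ℕ → Fin n → ℝ) (idx : ℕ → Fin n)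
    (hx0 : ∀ j : Fin n, x 0 j = c ^ (j : ℕ))
    (hsel : ∀ (t : ℕ) (j : Fin n),
      |(Qmat n α).mulVec (x t) j| ≤ |(Qmat n α).mulVec (x t) (idx t)|)
    (hupd : ∀ t : ℕ, x (t + 1) =
      x t - ((Qmat n α).mulVec (x t) (idx t) / Qmat n α (idx t) (idx t)) •
        stdBasis n (idx t)) :
    ∀ t : ℕ,
      idx t = (⟨t % n, Nat.mod_lt t (by omega)⟩ : Fin n) ∧
      (∀ j : Fin n, j ≠ idx t → x (t + 1) j = x t j) ∧
      x (t + 1) (idx t) = c ^ n * x t (idx t) := by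
  have : NeZero n := ⟨by omega⟩
  have hstep : ∀ t, x t = cyclicIterate c t → idx t = t ∧ x (t + 1) = cyclicIterate c (t + 1) := by
    intro t ht
    have hi : idx t = t :=
      eq_of_forall_abs_Qmat_mulVec_cyclicIterate_le hc0 hc1 hc fun j => ht ▸ hsel t j
    exact ⟨hi, by rw [hupd, ht, hi, cyclicIterate_sub_smul_stdBasis hα0 hc]⟩
  have hx : ∀ t, x t = cyclicIterate c t := fun t => by
    induction t with
    | zero => exact funext fun j => by rw [hx0, cyclicIterate_zero]
    | succ t ih => exact (hstep t ih).2
  intro t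
  obtain ⟨hi, hnext⟩ := hstep t (hx t)
  refine ⟨Fin.ext (by rw [hi, Fin.val_natCast]), fun j hj => ?_, ?_⟩
  · rw [hnext, hx t]
    exact cyclicIterate_succ_of_ne (hi ▸ hj)
  · rw [hnext, hx t, hi, cyclicIterate_succ_natCast_self, cyclicIterate_natCast_self, pow_add,
      mul_comm]
end

section
/- Let n > 2 be an integer and 0 < α ≤ 1/2. Then every c ∈ (0,1) satisfying c^{n−1} = ((1 − α)/n)·Σ_{k=0}^{n−1} c^{k} satisfies c ≥ 1 − 3α/n. -/
/-!
With `x = c⁻¹` the equation reads `(1 - α) ∑_{j<n} x ^ j = n`, and the left side is increasing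
in `x`. At `x = 1 + e`, `e = 3α / (n - 3α)`, the second-order Bernoulli bound
`∑_{j<n} (1 + e) ^ j ≥ n + C(n,2) e + C(n,3) e²` already makes it at least `n`, so
`c⁻¹ ≤ 1 + e = n / (n - 3α)`.
-/

open Finset

theorem sum_range_pow_eq_pow_mul_sum_range_inv_pow {K : Type*} [DivisionRing K] {c : K}
    (hc : c ≠ 0) (n : ℕ) :
    ∑ k ∈ range n, c ^ k = c ^ (n - 1) * ∑ j ∈ range n, c⁻¹ ^ j := by
  rw [mul_sum, ← sum_range_reflect]
  refine sum_congr rfl fun j hj => ?_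
  rw [mem_range] at hj
  rw [inv_pow, ← pow_sub₀ c hc (by omega)]

section
variable {K : Type*} [Field K] [LinearOrder K] [IsStrictOrderedRing K]

theorem sum_range_pow_lt_sum_range_pow {x y : K} (hx : 0 ≤ x) (hxy : x < y) {n : ℕ}
    (hn : 2 ≤ n) : ∑ j ∈ range n, x ^ j < ∑ j ∈ range n, y ^ j :=
  sum_lt_sum (fun j _ => pow_le_pow_left₀ hx hxy.le j) ⟨1, by simp; omega, by simpa⟩

theorem one_add_mul_add_sq_le_pow {e : K} (he : 0 ≤ e) (j : ℕ) :
    1 + j * e + j * (j - 1) / 2 * e ^ 2 ≤ (1 + e) ^ j := by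
  induction j with
  | zero => simp
  | succ k ih =>
    have hk : (0 : K) ≤ k * (k - 1) := by
      rcases k.eq_zero_or_pos with rfl | hk
      · simp
      · have : (1 : K) ≤ k := by exact_mod_cast hk
        nlinarith
    calc 1 + (k + 1 : ℕ) * e + (k + 1 : ℕ) * ((k + 1 : ℕ) - 1) / 2 * e ^ 2
        ≤ (1 + k * e + k * (k - 1) / 2 * e ^ 2) * (1 + e) := by
          push_cast; nlinarith [mul_nonneg hk (pow_nonneg he 3)]
      _ ≤ (1 + e) ^ k * (1 + e) := by gcongr
      _ = (1 + e) ^ (k + 1) := (pow_succ _ _).symm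

theorem le_sum_range_one_add_pow {e : K} (he : 0 ≤ e) (n : ℕ) :
    n + n * (n - 1) / 2 * e + n * (n - 1) * (n - 2) / 6 * e ^ 2 ≤
      ∑ j ∈ range n, (1 + e) ^ j := by
  induction n with
  | zero => simp
  | succ m ih =>
    rw [sum_range_succ]
    calc ((m + 1 : ℕ) : K) + (m + 1 : ℕ) * ((m + 1 : ℕ) - 1) / 2 * e
          + (m + 1 : ℕ) * ((m + 1 : ℕ) - 1) * ((m + 1 : ℕ) - 2) / 6 * e ^ 2
        = (m + m * (m - 1) / 2 * e + m * (m - 1) * (m - 2) / 6 * e ^ 2)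
          + (1 + m * e + m * (m - 1) / 2 * e ^ 2) := by push_cast; ring
      _ ≤ _ := add_le_add ih (one_add_mul_add_sq_le_pow he m)

theorem le_one_sub_mul_cubic {N α e : K} (hN : 3 ≤ N) (hα0 : 0 ≤ α) (hα : α ≤ 1 / 2)
    (he : (N - 3 * α) * e = 3 * α) :
    N ≤ (1 - α) * (N + N * (N - 1) / 2 * e + N * (N - 1) * (N - 2) / 6 * e ^ 2) := by
  have hd : 0 < N - 3 * α := by linarith
  have hgap : (N - 3 * α) ^ 2 *
        ((1 - α) * (N + N * (N - 1) / 2 * e + N * (N - 1) * (N - 2) / 6 * e ^ 2) - N)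
      = N * α / 2 * (3 * (1 - α) * (N - 1) * (N + (N - 5) * α) - 2 * (N - 3 * α) ^ 2) := by
    linear_combination (1 - α) * N *
      ((N - 1) / 2 * (N - 3 * α) + (N - 1) * (N - 2) / 6 * ((N - 3 * α) * e + 3 * α)) * he
  -- The difference is concave in `α`, so it suffices that it is `≥ 0` at `α = 0` and `α = 1/2`.
  have hP : 2 * (N - 3 * α) ^ 2 ≤ 3 * (1 - α) * (N - 1) * (N + (N - 5) * α) := by
    nlinarith [mul_nonneg (by linarith : (0 : K) ≤ 1 - 2 * α) (by nlinarith : (0 : K) ≤ N ^ 2 - 3 * N),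
      mul_nonneg hα0 (by nlinarith : (0 : K) ≤ N ^ 2 - 3),
      mul_nonneg (mul_nonneg hα0 (by linarith : (0 : K) ≤ 1 / 2 - α))
        (by nlinarith [sq_nonneg (N - 3)] : (0 : K) ≤ N ^ 2 - 6 * N + 11)]
  have : 0 ≤ (N - 3 * α) ^ 2 *
      ((1 - α) * (N + N * (N - 1) / 2 * e + N * (N - 1) * (N - 2) / 6 * e ^ 2) - N) := by
    rw [hgap]
    exact mul_nonneg (by positivity) (by linarith)
  exact sub_nonneg.1 (nonneg_of_mul_nonneg_right this (by positivity))

end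

theorem c_alpha_lower_bound_general {n : ℕ} (hn : 2 < n)
    (α : ℝ) (hα0 : 0 < α) (hα : α ≤ 1 / 2)
    (c : ℝ) (hc0 : 0 < c)
    (heq : c ^ (n - 1) = ((1 - α) / n) * ∑ k ∈ Finset.range n, c ^ k) :
    1 - 3 * α / n ≤ c := by
  have hN : (3 : ℝ) ≤ n := by exact_mod_cast hn
  have hd : 0 < (n : ℝ) - 3 * α := by linarith
  obtain ⟨e, he⟩ : ∃ e, ((n : ℝ) - 3 * α) * e = 3 * α := ⟨_, mul_div_cancel₀ _ hd.ne'⟩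
  have he0 : 0 ≤ e := nonneg_of_mul_nonneg_right (by rw [he]; positivity) hd
  have hsum : (1 - α) * ∑ j ∈ range n, c⁻¹ ^ j = n := by
    rw [sum_range_pow_eq_pow_mul_sum_range_inv_pow hc0.ne'] at heq
    field_simp at heq
    simpa only [one_div] using heq.symm
  have hbound : (n : ℝ) ≤ (1 - α) * ∑ j ∈ range n, (1 + e) ^ j :=
    (le_one_sub_mul_cubic hN hα0.le hα he).trans
      (mul_le_mul_of_nonneg_left (le_sum_range_one_add_pow he0 n) (by linarith))
  have hinv : c⁻¹ ≤ 1 + e := by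
    by_contra! h
    have := mul_lt_mul_of_pos_left (sum_range_pow_lt_sum_range_pow (by linarith) h
      (by omega : 2 ≤ n)) (by linarith : (0 : ℝ) < 1 - α)
    linarith
  have h1e : 1 - 3 * α / n = (1 + e)⁻¹ := by
    have : (0 : ℝ) < n := by linarith
    field_simp
    linear_combination he
  rw [h1e]
  exact inv_le_of_inv_le₀ hc0 hinv

/-- every solution `c ∈ (0,1)` of
`c^{n−1} = ((1−α)/n) ∑_{k=0}^{n−1} c^k` satisfies `c ≥ 1 − 3α/n`. -/
theorem c_alpha_lower_bound {n : ℕ} (hn : 2 < n)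
    (α : ℝ) (hα0 : 0 < α) (hα : α ≤ 1 / 2)
    (c : ℝ) (hc0 : 0 < c) (hc1 : c < 1)
    (heq : c ^ (n - 1) = ((1 - α) / n) * ∑ k ∈ Finset.range n, c ^ k) :
    1 - 3 * α / n ≤ c :=
  c_alpha_lower_bound_general hn α hα0 hα c hc0 heq
end

section
/- Let n > 2 be an integer, 0 < α ≤ 1/2, and define Ψ(c) = 1 − n·(1 − c)·c^{n−1}/(1 − c^{n}) for c ∈ (0,1). If 1 − 3α/n ∈ (0,1) and 1 − 2α/n ∈ (0,1), then Ψ(1 − 3α/n) ≥ α and Ψ(1 − 2α/n) ≤ α. -/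
/-!
`α ≤ Ψ(c)` amounts to `n(1-c)c^(n-1) ≤ (1-α)(1-c^n)`, and `Ψ(c) ≤ α` to the reverse inequality.
Both are proved by replacing powers with their binomial expansions truncated after the cubic
term, which bound `(1+t)^j` from below for every `t ≥ -1`. At `c = 1 - 3α/n` one expands
`c^(-n) = (1+u)^n` with `u = 3α/(n-3α)`; at `c = 1 - 2α/n` one expands `c^n` and `c^(n-1)`
directly. What is left are rational inequalities in `n` and `α`, whose differences factor with
a factor that is nonnegative for `n ≥ 3` and `0 < α ≤ 1/2`.
-/

noncomputable def psi (n : ℕ) (c : ℝ) : ℝ := 1 - n * (1 - c) * c ^ (n - 1) / (1 - c ^ n)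

noncomputable def cubicTrunc (m t : ℝ) : ℝ :=
  1 + m * t + m * (m - 1) / 2 * t ^ 2 + m * (m - 1) * (m - 2) / 6 * t ^ 3

lemma one_add_mul_cubicTrunc (m t : ℝ) :
    (1 + t) * cubicTrunc m t = cubicTrunc (m + 1) t + m * (m - 1) * (m - 2) / 6 * t ^ 4 := by
  unfold cubicTrunc
  ring

lemma cast_mul_cast_sub_one_mul_cast_sub_two_nonneg (j : ℕ) :
    0 ≤ (j : ℝ) * (j - 1) * (j - 2) := by
  rcases Nat.lt_or_ge j 2 with hj | hj
  · interval_cases j <;> norm_num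
  · have : (2 : ℝ) ≤ j := by exact_mod_cast hj
    exact mul_nonneg (mul_nonneg (by linarith) (by linarith)) (by linarith)

lemma cubicTrunc_le_one_add_pow {t : ℝ} (ht : -1 ≤ t) (j : ℕ) :
    cubicTrunc j t ≤ (1 + t) ^ j := by
  induction j with
  | zero => simp [cubicTrunc]
  | succ j ih =>
    have hquartic : 0 ≤ (j : ℝ) * (j - 1) * (j - 2) / 6 * t ^ 4 := by
      have := cast_mul_cast_sub_one_mul_cast_sub_two_nonneg j
      positivity
    calc cubicTrunc (j + 1 : ℕ) t ≤ (1 + t) * cubicTrunc j t := by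
          rw [one_add_mul_cubicTrunc, Nat.cast_succ]
          linarith
      _ ≤ (1 + t) * (1 + t) ^ j := by gcongr; linarith
      _ = (1 + t) ^ (j + 1) := (pow_succ' _ _).symm

section KeyInequalities

variable {m α : ℝ} (hm : 3 ≤ m) (hα0 : 0 < α) (hα : α ≤ 1 / 2)
include hm hα0 hα

lemma three_mul_one_add_le_cubicTrunc_sub_one :
    3 * α * (1 + 3 * α / (m - 3 * α)) ≤
      (1 - α) * (cubicTrunc m (3 * α / (m - 3 * α)) - 1) := by
  have hs : 0 < m - 3 * α := by linarith
  have hP : 0 ≤ 3 * (1 - α) * (m - 1) * (m * (1 + α) - 5 * α) - 2 * (m - 3 * α) ^ 2 := by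
    nlinarith [mul_nonneg (by nlinarith : (0 : ℝ) ≤ 1 - 3 * α ^ 2) (sq_nonneg (m - 3)),
      mul_nonneg (by linarith : (0 : ℝ) ≤ 1 - α) (by linarith : (0 : ℝ) ≤ m - 3),
      mul_nonneg hα0.le (by linarith : (0 : ℝ) ≤ 1 - α)]
  have hdiff : (1 - α) * (cubicTrunc m (3 * α / (m - 3 * α)) - 1)
      - 3 * α * (1 + 3 * α / (m - 3 * α))
      = 3 * α ^ 2 * m * (3 * (1 - α) * (m - 1) * (m * (1 + α) - 5 * α)
          - 2 * (m - 3 * α) ^ 2) / (2 * (m - 3 * α) ^ 3) := by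
    have : m - α * 3 ≠ 0 := by linarith
    unfold cubicTrunc
    field_simp
    ring
  have hm0 : 0 < m := by linarith
  rw [← sub_nonneg, hdiff]
  exact div_nonneg (mul_nonneg (by positivity) hP) (by positivity)

lemma one_sub_mul_one_sub_cubicTrunc_le :
    (1 - α) * (1 - cubicTrunc m (-(2 * α / m))) ≤
      2 * α * cubicTrunc (m - 1) (-(2 * α / m)) := by
  have hm0 : 0 < m := by linarith
  have hR : 0 ≤ 3 * m ^ 2 + α * m * (m - 1) * (m - 8)
      + 2 * α ^ 2 * (m - 1) * (m - 2) * (6 - m) := by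
    rcases le_or_gt m 6 with h6 | h6
    · have t1 : 0 ≤ α ^ 2 * ((m - 1) * (m - 2) * (6 - m)) :=
        mul_nonneg (sq_nonneg α) (mul_nonneg (mul_nonneg (by linarith) (by linarith))
          (by linarith))
      have t2 : 0 ≤ (1 / 2 - α) * (m * (m - 1) * (8 - m)) :=
        mul_nonneg (by linarith) (mul_nonneg (mul_nonneg hm0.le (by linarith)) (by linarith))
      nlinarith [sq_nonneg (2 * m - 3)]
    · have t1 : 0 ≤ (α - 2 * α ^ 2) * ((m - 1) * (m - 2) * (m - 6)) :=
        mul_nonneg (by nlinarith) (mul_nonneg (mul_nonneg (by linarith) (by linarith))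
          (by linarith))
      have t2 : 0 ≤ (1 / 2 - α) * (m - 1) := mul_nonneg (by linarith) (by linarith)
      nlinarith [sq_nonneg (m - 1)]
  have hdiff : 2 * α * cubicTrunc (m - 1) (-(2 * α / m))
      - (1 - α) * (1 - cubicTrunc m (-(2 * α / m)))
      = 2 * α ^ 2 * (3 * m ^ 2 + α * m * (m - 1) * (m - 8)
          + 2 * α ^ 2 * (m - 1) * (m - 2) * (6 - m)) / (3 * m ^ 3) := by
    unfold cubicTrunc
    field_simp
    ring
  rw [← sub_nonneg, hdiff]
  exact div_nonneg (mul_nonneg (by positivity) hR) (by positivity)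

end KeyInequalities

section Psi

variable {n : ℕ} {c : ℝ}

lemma le_psi_iff (hn : n ≠ 0) (hc0 : 0 ≤ c) (hc1 : c < 1) (α : ℝ) :
    α ≤ psi n c ↔ n * (1 - c) * c ^ (n - 1) ≤ (1 - α) * (1 - c ^ n) := by
  rw [psi, le_sub_comm, div_le_iff₀ (sub_pos.2 (pow_lt_one₀ hc0 hc1 hn)), mul_comm]

lemma psi_le_iff (hn : n ≠ 0) (hc0 : 0 ≤ c) (hc1 : c < 1) (α : ℝ) :
    psi n c ≤ α ↔ (1 - α) * (1 - c ^ n) ≤ n * (1 - c) * c ^ (n - 1) := by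
  rw [psi, sub_le_comm, le_div_iff₀ (sub_pos.2 (pow_lt_one₀ hc0 hc1 hn)), mul_comm]

variable (hn : 3 ≤ n) {α : ℝ} (hα0 : 0 < α) (hα : α ≤ 1 / 2)
include hn hα0 hα

lemma le_psi_one_sub_three_mul_div : α ≤ psi n (1 - 3 * α / n) := by
  have hm : (3 : ℝ) ≤ n := by exact_mod_cast hn
  have hn0 : n ≠ 0 := by omega
  have hs : 0 < (n : ℝ) - 3 * α := by linarith
  have hu0 : 0 ≤ 3 * α / ((n : ℝ) - 3 * α) := by positivity
  have hcu : (1 - 3 * α / n) * (1 + 3 * α / ((n : ℝ) - 3 * α)) = 1 := by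
    field_simp
    ring
  have h1c : (n : ℝ) * (1 - (1 - 3 * α / n)) = 3 * α := by
    field_simp
    ring
  have hkey := three_mul_one_add_le_cubicTrunc_sub_one hm hα0 hα
  generalize 3 * α / ((n : ℝ) - 3 * α) = u at hu0 hcu hkey ⊢
  generalize 1 - 3 * α / (n : ℝ) = c at hcu h1c ⊢
  have hc1 : c < 1 := by nlinarith
  have hc0 : 0 ≤ c := by nlinarith
  rw [le_psi_iff hn0 hc0 hc1]
  calc (n : ℝ) * (1 - c) * c ^ (n - 1) = c ^ (n - 1) * (c * (1 + u)) * (3 * α) := by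
        rw [h1c, hcu]
        ring
    _ = c ^ n * (3 * α * (1 + u)) := by
        rw [← pow_sub_one_mul hn0]
        ring
    _ ≤ c ^ n * ((1 - α) * (cubicTrunc n u - 1)) := by
        gcongr
    _ ≤ c ^ n * ((1 - α) * ((1 + u) ^ n - 1)) := by
        have := cubicTrunc_le_one_add_pow (by linarith : -1 ≤ u) n
        gcongr
        linarith
    _ = (1 - α) * ((c * (1 + u)) ^ n - c ^ n) := by rw [mul_pow]; ring
    _ = (1 - α) * (1 - c ^ n) := by rw [hcu, one_pow]

lemma psi_one_sub_two_mul_div_le : psi n (1 - 2 * α / n) ≤ α := by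
  have hm : (3 : ℝ) ≤ n := by exact_mod_cast hn
  have hn0 : n ≠ 0 := by omega
  have hx0 : 0 < 2 * α / n := by positivity
  have hx1 : 2 * α / n ≤ 1 := by rw [div_le_one (by linarith)]; linarith
  have h1c : (n : ℝ) * (1 - (1 - 2 * α / n)) = 2 * α := by
    field_simp
    ring
  have hpow := cubicTrunc_le_one_add_pow (by linarith : -1 ≤ -(2 * α / n)) n
  have hpow_pred := cubicTrunc_le_one_add_pow (by linarith : -1 ≤ -(2 * α / n)) (n - 1)
  rw [← sub_eq_add_neg] at hpow hpow_pred
  rw [Nat.cast_pred (by omega)] at hpow_pred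
  rw [psi_le_iff hn0 (by linarith) (by linarith)]
  calc (1 - α) * (1 - (1 - 2 * α / n) ^ n)
      ≤ (1 - α) * (1 - cubicTrunc n (-(2 * α / n))) := by gcongr; linarith
    _ ≤ 2 * α * cubicTrunc (n - 1) (-(2 * α / n)) :=
        one_sub_mul_one_sub_cubicTrunc_le hm hα0 hα
    _ ≤ 2 * α * (1 - 2 * α / n) ^ (n - 1) := by gcongr
    _ = n * (1 - (1 - 2 * α / n)) * (1 - 2 * α / n) ^ (n - 1) := by rw [h1c]

end Psi

theorem psi_bounds_general {n : ℕ} (hn : 2 < n)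
    (α : ℝ) (hα0 : 0 < α) (hα : α ≤ 1 / 2)
    (Ψ : ℝ → ℝ)
    (hΨ : ∀ c : ℝ, Ψ c = 1 - n * (1 - c) * c ^ (n - 1) / (1 - c ^ n)) :
    α ≤ Ψ (1 - 3 * α / n) ∧ Ψ (1 - 2 * α / n) ≤ α := by
  obtain rfl : Ψ = psi n := funext hΨ
  exact ⟨le_psi_one_sub_three_mul_div hn hα0 hα, psi_one_sub_two_mul_div_le hn hα0 hα⟩

/-- for `Ψ(c) = 1 − n(1−c)c^{n−1}/(1−c^n)` one has
`Ψ(1 − 3α/n) ≥ α` and `Ψ(1 − 2α/n) ≤ α`. -/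
theorem psi_bounds {n : ℕ} (hn : 2 < n)
    (α : ℝ) (hα0 : 0 < α) (hα : α ≤ 1 / 2)
    (Ψ : ℝ → ℝ)
    (hΨ : ∀ c : ℝ, Ψ c = 1 - n * (1 - c) * c ^ (n - 1) / (1 - c ^ n))
    (h3 : 1 - 3 * α / n ∈ Set.Ioo (0 : ℝ) 1)
    (h2 : 1 - 2 * α / n ∈ Set.Ioo (0 : ℝ) 1) :
    α ≤ Ψ (1 - 3 * α / n) ∧ Ψ (1 - 2 * α / n) ≤ α :=
  psi_bounds_general hn α hα0 hα Ψ hΨ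
end

section
/- Let L > 0, x ∈ ℝ, let Ψ: ℝ → ℝ be convex and continuous, and define V(y, s) = s·y + (L/2)·y² + Ψ(x + y). Let ℓ ≤ g ≤ u be real numbers, let u* be a minimizer of y ↦ V(y, u) and ℓ* a minimizer of y ↦ V(y, ℓ), and set ω_u = V(u*, u) + max{0, u*·(ℓ − u)} and ω_ℓ = V(ℓ*, ℓ) + max{0, ℓ*·(u − ℓ)}. Then inf_{y∈ℝ} V(y, g) ≤ min{ ω_u, ω_ℓ, Ψ(x) }. -/
/-! For fixed `y`, `V y s = s * y + F y` is affine in `s`, so on the segment between two slopes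
it lies between its values at the endpoints. The lower envelope makes `y ↦ V y g` bounded below
by the two minimal values, and the upper envelope
`max (V y u) (V y ℓ) = V y u + max 0 (y * (ℓ - u))` bounds `V u* g` by `ω_u` (symmetrically for
`ω_ℓ`); finally `V 0 g = Ψ x`. -/

open Set

section AffineInSlope

variable {V : ℝ → ℝ → ℝ} {F : ℝ → ℝ} {s t g : ℝ}

lemma apply_mem_uIcc_of_mem_uIcc (hF : ∀ y s, V y s = s * y + F y)
    (hg : g ∈ uIcc s t) (y : ℝ) :
    V y g ∈ uIcc (V y s) (V y t) := by
  simp only [hF, ← image_add_const_uIcc, ← image_mul_const_uIcc]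
  exact mem_image_of_mem _ (mem_image_of_mem _ hg)

lemma apply_le_add_max_of_mem_uIcc (hF : ∀ y s, V y s = s * y + F y)
    (hg : g ∈ uIcc s t) (y : ℝ) :
    V y g ≤ V y s + max 0 (y * (t - s)) := by
  have hst : V y t = V y s + y * (t - s) := by simp only [hF]; ring
  calc V y g ≤ max (V y s) (V y t) := (apply_mem_uIcc_of_mem_uIcc hF hg y).2
    _ = V y s + max 0 (y * (t - s)) := by rw [hst, ← max_add_add_left, add_zero]

lemma bddBelow_range_of_mem_uIcc (hF : ∀ y s, V y s = s * y + F y) {ys yt : ℝ}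
    (hs : ∀ y, V ys s ≤ V y s) (ht : ∀ y, V yt t ≤ V y t) (hg : g ∈ uIcc s t) :
    BddBelow (range fun y => V y g) :=
  ⟨min (V ys s) (V yt t), forall_mem_range.2 fun y =>
    (min_le_min (hs y) (ht y)).trans (apply_mem_uIcc_of_mem_uIcc hF hg y).1⟩

end AffineInSlope

theorem model_min_upper_bound_general (L x : ℝ)
    (Ψ : ℝ → ℝ)
    (V : ℝ → ℝ → ℝ)
    (hV : ∀ y s : ℝ, V y s = s * y + L / 2 * y ^ 2 + Ψ (x + y))
    (l g u : ℝ) (hlg : l ≤ g) (hgu : g ≤ u)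
    (ustar lstar : ℝ)
    (hustar : ∀ y : ℝ, V ustar u ≤ V y u)
    (hlstar : ∀ y : ℝ, V lstar l ≤ V y l) :
    (⨅ y : ℝ, V y g) ≤
      min (min (V ustar u + max 0 (ustar * (l - u)))
        (V lstar l + max 0 (lstar * (u - l)))) (Ψ x) := by
  obtain ⟨F, hF⟩ : ∃ F : ℝ → ℝ, ∀ y s, V y s = s * y + F y :=
    ⟨fun y => L / 2 * y ^ 2 + Ψ (x + y), fun y s => by rw [hV, add_assoc]⟩
  have hg : g ∈ uIcc u l := mem_uIcc.2 (Or.inr ⟨hlg, hgu⟩)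
  have hbdd : BddBelow (range fun y => V y g) := bddBelow_range_of_mem_uIcc hF hustar hlstar hg
  refine le_min (le_min ?_ ?_) ?_
  · exact (ciInf_le hbdd ustar).trans (apply_le_add_max_of_mem_uIcc hF hg ustar)
  · rw [uIcc_comm] at hg
    exact (ciInf_le hbdd lstar).trans (apply_le_add_max_of_mem_uIcc hF hg lstar)
  · exact (ciInf_le hbdd 0).trans_eq (by simp [hV])

/-- upper bounds on the minimum of the coordinate-wise model
`V(y,s) = s y + (L/2) y² + Ψ(x+y)` at the unknown value `s = g ∈ [ℓ,u]`:
`inf_y V(y,g) ≤ min{ω_u, ω_ℓ, Ψ(x)}` with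
`ω_u = V(u*,u) + max{0, u*(ℓ−u)}` and `ω_ℓ = V(ℓ*,ℓ) + max{0, ℓ*(u−ℓ)}`. -/
theorem model_min_upper_bound (L x : ℝ) (hL : 0 < L)
    (Ψ : ℝ → ℝ) (hΨconv : ConvexOn ℝ Set.univ Ψ) (hΨcont : Continuous Ψ)
    (V : ℝ → ℝ → ℝ)
    (hV : ∀ y s : ℝ, V y s = s * y + L / 2 * y ^ 2 + Ψ (x + y))
    (l g u : ℝ) (hlg : l ≤ g) (hgu : g ≤ u)
    (ustar lstar : ℝ)
    (hustar : ∀ y : ℝ, V ustar u ≤ V y u)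
    (hlstar : ∀ y : ℝ, V lstar l ≤ V y l) :
    (⨅ y : ℝ, V y g) ≤
      min (min (V ustar u + max 0 (ustar * (l - u)))
        (V lstar l + max 0 (lstar * (u - l)))) (Ψ x) :=
  model_min_upper_bound_general L x Ψ V hV l g u hlg hgu ustar lstar hustar hlstar
end

section
/- Let m, v, w ∈ ℝⁿ satisfy v_i ≤ m_i ≤ w_i for all i ∈ [n], and let I ⊆ [n] be nonempty such that v_j > (1/|I|)·Σ_{i∈I} w_i for all j ∉ I. Then (1/|I|)·Σ_{i∈I} m_i ≤ (1/n)·Σ_{i=1}^{n} m_i. Consequently, in ASCD for the GS-q rule, where m_i = min_{y∈ℝ} V_i(x, y, ∇_i f(x)) and v, w are the computed lower and upper bounds on these model minima, choosing the active coordinate uniformly from I yields expected model progress at least that of choosing uniformly from [n]. -/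
/-!
Write `a` for the average of `m` over `I`. Every `j ∉ I` has
`a ≤ avg_I w < v j ≤ m j`, so adding the coordinates outside `I` to `I` only brings in
values at least `a`, which cannot pull the average below `a`.
-/

open Finset

namespace Finset

variable {ι 𝕜 : Type*} [Field 𝕜] [LinearOrder 𝕜] [IsStrictOrderedRing 𝕜]

theorem card_mul_avg_eq_sum (s : Finset ι) (f : ι → 𝕜) :
    (#s : 𝕜) * ((1 / #s) * ∑ i ∈ s, f i) = ∑ i ∈ s, f i := by
  rcases s.eq_empty_or_nonempty with rfl | hs
  · simp
  · have : (#s : 𝕜) ≠ 0 := by exact_mod_cast hs.card_ne_zero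
    field_simp

theorem avg_le_avg_of_subset [DecidableEq ι] {s t : Finset ι} (hst : s ⊆ t) (f : ι → 𝕜)
    (h : ∀ j ∈ t \ s, (1 / #s) * ∑ i ∈ s, f i ≤ f j) :
    (1 / #s) * ∑ i ∈ s, f i ≤ (1 / #t) * ∑ i ∈ t, f i := by
  set a := (1 / (#s : 𝕜)) * ∑ i ∈ s, f i
  rcases t.eq_empty_or_nonempty with rfl | ht
  · simp [a, subset_empty.mp hst]
  have hcard : (#t : 𝕜) = #(t \ s) + #s := by
    exact_mod_cast (card_sdiff_add_card_eq_card hst).symm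
  have htotal : (#t : 𝕜) * a ≤ ∑ i ∈ t, f i :=
    calc (#t : 𝕜) * a = #(t \ s) • a + #s * a := by rw [hcard, nsmul_eq_mul]; ring
      _ ≤ ∑ j ∈ t \ s, f j + ∑ i ∈ s, f i := by
        rw [card_mul_avg_eq_sum]; gcongr; exact card_nsmul_le_sum _ _ _ h
      _ = ∑ i ∈ t, f i := sum_sdiff hst
  have htpos : (0 : 𝕜) < #t := by exact_mod_cast ht.card_pos
  rw [one_div_mul_eq_div, le_div_iff₀ htpos]
  linarith

end Finset

theorem gsq_active_set_average_bound_general {n : ℕ}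
    (m v w : Fin n → ℝ)
    (hvm : ∀ i, v i ≤ m i) (hmw : ∀ i, m i ≤ w i)
    (I : Finset (Fin n))
    (hI : ∀ j ∉ I, (1 / (I.card : ℝ)) * ∑ i ∈ I, w i < v j) :
    (1 / (I.card : ℝ)) * ∑ i ∈ I, m i ≤ (1 / (n : ℝ)) * ∑ i, m i := by
  have hm_le_w :
      (1 / (I.card : ℝ)) * ∑ i ∈ I, m i ≤ (1 / (I.card : ℝ)) * ∑ i ∈ I, w i := by
    gcongr with i; exact hmw i
  have hout : ∀ j ∈ univ \ I, (1 / (I.card : ℝ)) * ∑ i ∈ I, m i ≤ m j := fun j hj =>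
    hm_le_w.trans ((hI j (mem_sdiff.mp hj).2).le.trans (hvm j))
  simpa using avg_le_avg_of_subset (subset_univ I) m hout

/-- safe active-set selection for the GS-q rule.  If
`v_i ≤ m_i ≤ w_i` and every `j ∉ I` satisfies `v_j > (1/|I|) ∑_{i∈I} w_i`, then the
average of `m` over the active set `I` is at most its average over all of `[n]`
(so uniform sampling from `I` yields expected model progress at least that of
uniform sampling from `[n]`). -/
theorem gsq_active_set_average_bound {n : ℕ} (hn : 0 < n)
    (m v w : Fin n → ℝ)
    (hvm : ∀ i, v i ≤ m i) (hmw : ∀ i, m i ≤ w i)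
    (I : Finset (Fin n)) (hIne : I.Nonempty)
    (hI : ∀ j ∉ I, (1 / (I.card : ℝ)) * ∑ i ∈ I, w i < v j) :
    (1 / (I.card : ℝ)) * ∑ i ∈ I, m i ≤ (1 / (n : ℝ)) * ∑ i, m i :=
  gsq_active_set_average_bound_general m v w hvm hmw I hI
end

section
/- Let n, s, c, T be positive real numbers with n > s, and let α ∈ [0, 1] satisfy the equilibrium equation (1 − α)·(n − s)/T = α·(n − s)/(α·(n − s) + c·s). Define ρ = c·s/(α·(n − s) + c·s) and θ = n² + (c − 1)²·s² + 2n·((c − 1)·s − T) + 2·(1 + c)·s·T + T². Then θ ≥ 0, α = (n − (1 + c)·s − T + √θ)/(2·(n − s)), and ρ = 2·c·s/(c·s + n − s − T + √θ). -/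
/-! Clearing denominators, the equilibrium equation says that `α` is a root of the quadratic
`(n - s) x² + (c s + T - (n - s)) x - c s`, whose discriminant is `θ`. Its constant term is
negative, so it has exactly one nonnegative root, the one with `+ √θ`; substituting this root
into `ρ` gives the closed form of the competitive ratio. -/

open Real

theorem sq_lt_discrim {a b c : ℝ} (ha : 0 < a) (hc : c < 0) : b ^ 2 < discrim a b c := by
  unfold discrim
  nlinarith

/-- The other root `(-b - √(discrim a b c)) / (2a)` is negative, as `|b| < √(discrim a b c)`. -/
theorem eq_quadratic_root_of_nonneg {a b c x : ℝ} (ha : 0 < a) (hc : c < 0) (hx : 0 ≤ x)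
    (h : a * (x * x) + b * x + c = 0) : x = (-b + √(discrim a b c)) / (2 * a) := by
  have hb : b ^ 2 < discrim a b c := sq_lt_discrim ha hc
  have hD : discrim a b c = √(discrim a b c) * √(discrim a b c) :=
    (mul_self_sqrt ((sq_nonneg b).trans hb.le)).symm
  rcases (quadratic_eq_zero_iff ha.ne' hD x).mp h with h | h
  · exact h
  · have habs : |b| < √(discrim a b c) := (lt_sqrt (abs_nonneg b)).mpr (by rwa [sq_abs])
    have : 0 ≤ -b - √(discrim a b c) := by
      rw [h] at hx
      exact nonneg_of_mul_nonneg_left (by simpa [div_eq_mul_inv] using hx) (by positivity)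
    linarith [neg_le_abs b]

theorem quadratic_of_equilibrium {A k T α : ℝ} (hA : 0 < A) (hT : T ≠ 0)
    (hden : α * A + k ≠ 0) (heq : (1 - α) * A / T = α * A / (α * A + k)) :
    A * (α * α) + (k + T - A) * α + -k = 0 := by
  have h : A * (A * (α * α) + (k + T - A) * α + -k) = 0 := by
    linear_combination -(div_eq_div_iff hT hden).mp heq
  exact (mul_eq_zero.mp h).resolve_left hA.ne'

theorem competitive_ratio_steady_state_general
    (n s c T α : ℝ) (hs : 0 < s) (hc : 0 < c) (hT : 0 < T)
    (hns : s < n) (hα0 : 0 ≤ α)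
    (heq : (1 - α) * (n - s) / T = α * (n - s) / (α * (n - s) + c * s))
    (θ : ℝ)
    (hθ : θ = n ^ 2 + (c - 1) ^ 2 * s ^ 2 + 2 * n * ((c - 1) * s - T) +
      2 * (1 + c) * s * T + T ^ 2)
    (ρ : ℝ) (hρ : ρ = c * s / (α * (n - s) + c * s)) :
    0 ≤ θ ∧
    α = (n - (1 + c) * s - T + Real.sqrt θ) / (2 * (n - s)) ∧
    ρ = 2 * c * s / (c * s + n - s - T + Real.sqrt θ) := by
  have hA : 0 < n - s := sub_pos.mpr hns
  have hcs : 0 < c * s := mul_pos hc hs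
  have hden : 0 < α * (n - s) + c * s := by positivity
  have hck : -(c * s) < 0 := neg_neg_iff_pos.mpr hcs
  have hθ_discrim : θ = discrim (n - s) (c * s + T - (n - s)) (-(c * s)) := by
    rw [hθ, discrim]; ring
  have hα : α = (n - (1 + c) * s - T + √θ) / (2 * (n - s)) := by
    rw [eq_quadratic_root_of_nonneg hA hck hα0
      (quadratic_of_equilibrium hA hT.ne' hden.ne' heq), hθ_discrim]
    ring_nf
  have hsum : c * s + n - s - T + √θ = 2 * (α * (n - s) + c * s) := by
    rw [hα]; field_simp; ring
  refine ⟨hθ_discrim ▸ (sq_nonneg _).trans (sq_lt_discrim hA hck).le, hα, ?_⟩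
  rw [hρ, hsum, mul_assoc, mul_div_mul_left _ _ two_ne_zero]

/-- steady-state competitive ratio computation.  If `α ∈ [0,1]`
solves the equilibrium equation `(1−α)(n−s)/T = α(n−s)/(α(n−s)+cs)`, then with
`θ = n² + (c−1)²s² + 2n((c−1)s − T) + 2(1+c)sT + T²` one has `θ ≥ 0`,
`α = (n − (1+c)s − T + √θ)/(2(n−s))`, and the competitive ratio
`ρ = cs/(α(n−s)+cs)` equals `2cs/(cs + n − s − T + √θ)`. -/
theorem competitive_ratio_steady_state
    (n s c T α : ℝ) (hn : 0 < n) (hs : 0 < s) (hc : 0 < c) (hT : 0 < T)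
    (hns : s < n) (hα0 : 0 ≤ α) (hα1 : α ≤ 1)
    (heq : (1 - α) * (n - s) / T = α * (n - s) / (α * (n - s) + c * s))
    (θ : ℝ)
    (hθ : θ = n ^ 2 + (c - 1) ^ 2 * s ^ 2 + 2 * n * ((c - 1) * s - T) +
      2 * (1 + c) * s * T + T ^ 2)
    (ρ : ℝ) (hρ : ρ = c * s / (α * (n - s) + c * s)) :
    0 ≤ θ ∧
    α = (n - (1 + c) * s - T + Real.sqrt θ) / (2 * (n - s)) ∧
    ρ = 2 * c * s / (c * s + n - s - T + Real.sqrt θ) :=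
  competitive_ratio_steady_state_general n s c T α hs hc hT hns hα0 heq θ hθ ρ hρ
end
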